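/- arXiv:2501.07920 — 3 statements merged into one kernel-verified Lean document; each statement's English description precedes it below -/
import Mathlib

section
/- Progress lemma: Let Π_φ = { (s1, s2, τ1) | τ1 ∈ Traces(s1) ∧ (s1,s2) ∈ fei_φ } with the proof-step relation (s1,s2,e1·τ1') →^{e2} (s1',s2',τ1') defined whenever s1 ⇝^{e1} s1', s2 ⇝^{e2} s2', and (e1,e2) ∈ φ, with both resulting components in Π_φ. Then every proof state in Π_φ has a successor: for all π ∈ Π_φ there exist e2 and π' ∈ Π_φ with π →^{e2} π'. -/
/-- A labeled transition system: states, optional-event-labeled steps, an initial state. -/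
structure LTS (S E : Type*) where
  init : S
  step : S → Option E → S → Prop

namespace LTS

/-- Silent transition. -/
def Silent {S E : Type*} (T : LTS S E) (s s' : S) : Prop := T.step s none s'

/-- `Obs T s e s'`: finitely many silent steps followed by an `e`-labeled step. -/
def Obs {S E : Type*} (T : LTS S E) (s : S) (e : E) (s' : S) : Prop :=
  ∃ s'', Relation.ReflTransGen T.Silent s s'' ∧ T.step s'' (some e) s'

/-- `τ` is an (infinite) trace originating from state `s`. -/
def IsTraceFrom {S E : Type*} (T : LTS S E) (s : S) (τ : ℕ → E) : Prop :=
  ∃ π : ℕ → S, π 0 = s ∧ ∀ i, T.Obs (π i) (τ i) (π (i + 1))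

end LTS

/-- Greatest fixed point of an operator on subsets. -/
def nuSet {A : Type*} (F : Set A → Set A) : Set A := ⋃₀ {R | R ⊆ F R}

/-- The ∀∃-invariant functor. -/
def feiF {S1 S2 E1 E2 : Type*} (T1 : LTS S1 E1) (T2 : LTS S2 E2) (φ : Set (E1 × E2))
    (R : Set (S1 × S2)) : Set (S1 × S2) :=
  {p | ∀ e1 s1', T1.Obs p.1 e1 s1' →
        ∃ e2 s2', T2.Obs p.2 e2 s2' ∧ (e1, e2) ∈ φ ∧ (s1', s2') ∈ R}

/-- Proof states: a state of each system together with a trace of the first state,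
where the two states are related by `fei_φ`. -/
def PiSet {S1 S2 E1 E2 : Type*} (T1 : LTS S1 E1) (T2 : LTS S2 E2) (φ : Set (E1 × E2)) :
    Set (S1 × S2 × (ℕ → E1)) :=
  {p | T1.IsTraceFrom p.1 p.2.2 ∧ (p.1, p.2.1) ∈ nuSet (feiF T1 T2 φ)}

/-- The labeled proof-step relation on proof states. -/
def ProofStep {S1 S2 E1 E2 : Type*} (T1 : LTS S1 E1) (T2 : LTS S2 E2) (φ : Set (E1 × E2))
    (p : S1 × S2 × (ℕ → E1)) (e2 : E2) (p' : S1 × S2 × (ℕ → E1)) : Prop :=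
  T1.Obs p.1 (p.2.2 0) p'.1 ∧ T2.Obs p.2.1 e2 p'.2.1 ∧
    (p.2.2 0, e2) ∈ φ ∧ p'.2.2 = fun i => p.2.2 (i + 1)

theorem LTS.IsTraceFrom.exists_obs_tail {S E : Type*} {T : LTS S E} {s : S} {τ : ℕ → E}
    (h : T.IsTraceFrom s τ) : ∃ s', T.Obs s (τ 0) s' ∧ T.IsTraceFrom s' fun i => τ (i + 1) := by
  obtain ⟨π, rfl, hπ⟩ := h
  exact ⟨π 1, hπ 0, π ∘ Nat.succ, rfl, fun i => hπ (i + 1)⟩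

theorem subset_nuSet {A : Type*} {F : Set A → Set A} {R : Set A} (h : R ⊆ F R) :
    R ⊆ nuSet F :=
  Set.subset_sUnion_of_mem h

theorem nuSet_subset_apply {A : Type*} {F : Set A → Set A} (hF : Monotone F) :
    nuSet F ⊆ F (nuSet F) := by
  rintro x ⟨R, hR, hx⟩
  exact hF (subset_nuSet hR) (hR hx)

theorem feiF_mono {S1 S2 E1 E2 : Type*} (T1 : LTS S1 E1) (T2 : LTS S2 E2)
    (φ : Set (E1 × E2)) : Monotone (feiF T1 T2 φ) := by
  intro R R' hRR' p hp e1 s1' hobs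
  obtain ⟨e2, s2', hobs2, hφ, hR⟩ := hp e1 s1' hobs
  exact ⟨e2, s2', hobs2, hφ, hRR' hR⟩

theorem progress {S1 S2 E1 E2 : Type*} (T1 : LTS S1 E1) (T2 : LTS S2 E2)
    (φ : Set (E1 × E2)) :
    ∀ p ∈ PiSet T1 T2 φ, ∃ (e2 : E2) (p' : S1 × S2 × (ℕ → E1)),
      p' ∈ PiSet T1 T2 φ ∧ ProofStep T1 T2 φ p e2 p' := by
  rintro ⟨s1, s2, τ⟩ ⟨hτ, hfei⟩
  obtain ⟨s1', hobs1, hτ'⟩ := hτ.exists_obs_tail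
  obtain ⟨e2, s2', hobs2, hφ, hfei'⟩ :=
    nuSet_subset_apply (feiF_mono T1 T2 φ) hfei (τ 0) s1' hobs1
  exact ⟨e2, (s1', s2', fun i => τ (i + 1)), ⟨hτ', hfei'⟩, hobs1, hobs2, hφ, rfl⟩
end

section
/- Coinductive safety proofs: if ψ is a safety relation (|ψ|_safe ⊆ ψ), then for all traces τ1, τ2: (τ1,τ2) ∈ ψ if and only if (τ1,τ2,ψ) ∈ safe. -/
/-- Prepend an event to an infinite trace. -/
def cons {E : Type*} (e : E) (τ : ℕ → E) : ℕ → E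
  | 0 => e
  | n + 1 => τ n

/-- The trace obtained by dropping the first letter. -/
def tail {E : Type*} (τ : ℕ → E) : ℕ → E := fun i => τ (i + 1)

/-- Concatenation of the length-`n` prefix of `τ` with the infinite trace `τ'`. -/
def pcat {E : Type*} (τ : ℕ → E) (n : ℕ) (τ' : ℕ → E) : ℕ → E :=
  fun i => if i < n then τ i else τ' (i - n)

/-- The safety closure of a binary trace relation. -/
def safeCl {E1 E2 : Type*} (ψ : Set ((ℕ → E1) × (ℕ → E2))) : Set ((ℕ → E1) × (ℕ → E2)) :=
  {p | ∀ n, ∃ (τ1' : ℕ → E1) (τ2' : ℕ → E2), (pcat p.1 n τ1', pcat p.2 n τ2') ∈ ψ}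

/-- The Brzozowski-style derivative of a binary trace relation. -/
def rderiv {E1 E2 : Type*} (e1 : E1) (e2 : E2) (ψ : Set ((ℕ → E1) × (ℕ → E2))) :
    Set ((ℕ → E1) × (ℕ → E2)) :=
  {p | (cons e1 p.1, cons e2 p.2) ∈ ψ}

/-- The functor for the coinductive characterization of the safety closure. -/
def safeF {E1 E2 : Type*}
    (C : Set ((ℕ → E1) × (ℕ → E2) × Set ((ℕ → E1) × (ℕ → E2)))) :
    Set ((ℕ → E1) × (ℕ → E2) × Set ((ℕ → E1) × (ℕ → E2))) :=
  {t | rderiv (t.1 0) (t.2.1 0) t.2.2 ≠ ∅ ∧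
       (tail t.1, tail t.2.1, rderiv (t.1 0) (t.2.1 0) t.2.2) ∈ C}

/-- The coinductive safety relation. -/
def safe {E1 E2 : Type*} : Set ((ℕ → E1) × (ℕ → E2) × Set ((ℕ → E1) × (ℕ → E2))) :=
  nuSet safeF

lemma cons_tail' {E : Type*} (σ : ℕ → E) : cons (σ 0) (tail σ) = σ := by
  funext i; cases i <;> rfl

lemma pcat_zero' {E : Type*} (σ a : ℕ → E) : pcat σ 0 a = a := by
  funext i; simp [pcat]

lemma cons_pcat' {E : Type*} (σ a : ℕ → E) (n : ℕ) :
    cons (σ 0) (pcat (tail σ) n a) = pcat σ (n + 1) a := by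
  funext i
  cases i with
  | zero => simp [cons, pcat]
  | succ i => simp [cons, pcat, tail, Nat.succ_lt_succ_iff, Nat.succ_sub_succ]

theorem safety_coinductive {E1 E2 : Type*} (ψ : Set ((ℕ → E1) × (ℕ → E2)))
    (hsafety : safeCl ψ ⊆ ψ) (τ1 : ℕ → E1) (τ2 : ℕ → E2) :
    (τ1, τ2) ∈ ψ ↔ (τ1, τ2, ψ) ∈ safe := by
  constructor
  · intro h
    refine ⟨{t | (t.1, t.2.1) ∈ t.2.2}, ?_, h⟩
    intro t ht
    have hmem : (tail t.1, tail t.2.1) ∈ rderiv (t.1 0) (t.2.1 0) t.2.2 := by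
      show (cons (t.1 0) (tail t.1), cons (t.2.1 0) (tail t.2.1)) ∈ t.2.2
      rw [cons_tail', cons_tail']; exact ht
    exact ⟨fun hemp => by simp [hemp] at hmem, hmem⟩
  · rintro ⟨R, hR, hmemR⟩
    apply hsafety
    intro n
    suffices h : ∀ n (σ1 : ℕ → E1) (σ2 : ℕ → E2) φ, (σ1, σ2, φ) ∈ R →
        ∃ a b, (pcat σ1 n a, pcat σ2 n b) ∈ φ from h n τ1 τ2 ψ hmemR
    intro n
    induction n with
    | zero =>
      intro σ1 σ2 φ hm
      obtain ⟨hne, _⟩ := hR hm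
      obtain ⟨⟨a, b⟩, hab⟩ := Set.nonempty_iff_ne_empty.mpr hne
      exact ⟨cons (σ1 0) a, cons (σ2 0) b, by simpa [pcat_zero', rderiv] using hab⟩
    | succ n ih =>
      intro σ1 σ2 φ hm
      obtain ⟨hne, htl⟩ := hR hm
      obtain ⟨a, b, hab⟩ := ih _ _ _ htl
      exact ⟨a, b, by rw [← cons_pcat', ← cons_pcat']; exact hab⟩
end

section
/- Soundness of fe: Define next^R_{e1,e2}(ψ) = { (s1,s2) | Δ_{e1,e2}(ψ) ≠ ∅ ∧ (s1,s2,Δ_{e1,e2}(ψ)) ∈ R }, feF(R) = { (s1,s2,ψ) | ∀ s1 ⇝^{e1} s1', ∃ s2 ⇝^{e2} s2', (s1',s2') ∈ next^R_{e1,e2}(ψ) }, and fe = ν.feF. If ψ is a safety relation and (I1, I2, ψ) ∈ fe, then for every trace τ1 of TS1 there exists a trace τ2 of TS2 with (τ1, τ2) ∈ ψ. -/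
/-- The `next` operator on pairs of states, relative to relation `R` on triples. -/
def nextOp {S1 S2 E1 E2 : Type*}
    (R : Set (S1 × S2 × Set ((ℕ → E1) × (ℕ → E2)))) (e1 : E1) (e2 : E2)
    (ψ : Set ((ℕ → E1) × (ℕ → E2))) : Set (S1 × S2) :=
  {p | rderiv e1 e2 ψ ≠ ∅ ∧ (p.1, p.2, rderiv e1 e2 ψ) ∈ R}

/-- The functor underlying the coinductive relation `fe`. -/
def feF {S1 S2 E1 E2 : Type*} (T1 : LTS S1 E1) (T2 : LTS S2 E2)
    (R : Set (S1 × S2 × Set ((ℕ → E1) × (ℕ → E2)))) :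
    Set (S1 × S2 × Set ((ℕ → E1) × (ℕ → E2))) :=
  {t | ∀ e1 s1', T1.Obs t.1 e1 s1' →
        ∃ e2 s2', T2.Obs t.2.1 e2 s2' ∧ (s1', s2') ∈ nextOp R e1 e2 t.2.2}

/-! A witness `R ⊆ feF R` lets `T2` answer every observable step of `T1`, and by
dependent choice this answers a whole trace `τ1` with a trace `τ2`. Along the way the relation
component of the triple is the derivative of `ψ` by the prefixes read so far, and it stays
nonempty; so every pair of prefixes of `(τ1, τ2)` extends into `ψ`, which is membership in the
safety closure of `ψ`. -/

theorem exists_seq_of_forall_exists {α : Type*} (P : ℕ → α → Prop) (Q : ℕ → α → α → Prop)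
    (a : α) (ha : P 0 a) (hstep : ∀ n x, P n x → ∃ y, P (n + 1) y ∧ Q n x y) :
    ∃ f : ℕ → α, f 0 = a ∧ ∀ n, P n (f n) ∧ Q n (f n) (f (n + 1)) := by
  choose g hgP hgQ using hstep
  let F : ∀ n, {x // P n x} := fun n => Nat.rec ⟨a, ha⟩ (fun n x => ⟨g n x x.2, hgP n x x.2⟩) n
  exact ⟨fun n => (F n).1, rfl, fun n => ⟨(F n).2, hgQ n _ (F n).2⟩⟩

section Traces

variable {E : Type*}

@[simp]
theorem pcat_zero (τ τ' : ℕ → E) : pcat τ 0 τ' = τ' := by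
  funext i
  simp [pcat]

theorem pcat_cons (τ τ' : ℕ → E) (n : ℕ) : pcat τ n (cons (τ n) τ') = pcat τ (n + 1) τ' := by
  funext i
  simp only [pcat]
  rcases lt_trichotomy i n with hlt | rfl | hgt
  · rw [if_pos hlt, if_pos (by omega)]
  · rw [if_neg (lt_irrefl i), if_pos (by omega), Nat.sub_self]
    rfl
  · rw [if_neg (by omega), if_neg (by omega), show i - n = i - (n + 1) + 1 by omega]
    rfl

end Traces

section Derivatives

variable {E1 E2 : Type*}

/-- `Δ_{u1,u2} ψ` for the length-`n` prefixes `u1`, `u2` of `τ1`, `τ2`. -/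
def rderivPrefix (τ1 : ℕ → E1) (τ2 : ℕ → E2) (n : ℕ) (ψ : Set ((ℕ → E1) × (ℕ → E2))) :
    Set ((ℕ → E1) × (ℕ → E2)) :=
  {p | (pcat τ1 n p.1, pcat τ2 n p.2) ∈ ψ}

@[simp]
theorem rderivPrefix_zero (τ1 : ℕ → E1) (τ2 : ℕ → E2) (ψ : Set ((ℕ → E1) × (ℕ → E2))) :
    rderivPrefix τ1 τ2 0 ψ = ψ := by
  simp [rderivPrefix]

theorem rderiv_rderivPrefix (τ1 : ℕ → E1) (τ2 : ℕ → E2) (n : ℕ)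
    (ψ : Set ((ℕ → E1) × (ℕ → E2))) :
    rderiv (τ1 n) (τ2 n) (rderivPrefix τ1 τ2 n ψ) = rderivPrefix τ1 τ2 (n + 1) ψ := by
  ext p
  simp [rderiv, rderivPrefix, pcat_cons]

theorem Set.Nonempty.of_rderiv {e1 : E1} {e2 : E2} {ψ : Set ((ℕ → E1) × (ℕ → E2))}
    (h : (rderiv e1 e2 ψ).Nonempty) : ψ.Nonempty :=
  let ⟨_, hp⟩ := h
  ⟨_, hp⟩

theorem mem_safeCl_iff_forall_rderivPrefix_nonempty {ψ : Set ((ℕ → E1) × (ℕ → E2))}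
    {p : (ℕ → E1) × (ℕ → E2)} :
    p ∈ safeCl ψ ↔ ∀ n, (rderivPrefix p.1 p.2 n ψ).Nonempty :=
  ⟨fun h n => let ⟨τ1', τ2', hψ⟩ := h n; ⟨(τ1', τ2'), hψ⟩,
   fun h n => let ⟨q, hq⟩ := h n; ⟨q.1, q.2, hq⟩⟩

theorem mem_safeCl_of_forall_rderivPrefix_succ_nonempty {ψ : Set ((ℕ → E1) × (ℕ → E2))}
    {τ1 : ℕ → E1} {τ2 : ℕ → E2} (h : ∀ n, (rderivPrefix τ1 τ2 (n + 1) ψ).Nonempty) :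
    (τ1, τ2) ∈ safeCl ψ :=
  mem_safeCl_iff_forall_rderivPrefix_nonempty.2 fun n =>
    (rderiv_rderivPrefix τ1 τ2 n ψ ▸ h n).of_rderiv

end Derivatives

theorem fe_sound {S1 S2 E1 E2 : Type*} (T1 : LTS S1 E1) (T2 : LTS S2 E2)
    (ψ : Set ((ℕ → E1) × (ℕ → E2))) (hsafety : safeCl ψ ⊆ ψ)
    (h : (T1.init, T2.init, ψ) ∈ nuSet (feF T1 T2)) :
    ∀ τ1 : ℕ → E1, T1.IsTraceFrom T1.init τ1 →
      ∃ τ2 : ℕ → E2, T2.IsTraceFrom T2.init τ2 ∧ (τ1, τ2) ∈ ψ := by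
  obtain ⟨R, hR, hinit⟩ := h
  rintro τ1 ⟨π1, hπ0, hπ1⟩
  obtain ⟨f, hf0, hf⟩ := exists_seq_of_forall_exists
    (fun n x => (π1 n, x.1, x.2) ∈ R)
    (fun n x y => ∃ e2, T2.Obs x.1 e2 y.1 ∧ y.2 = rderiv (τ1 n) e2 x.2 ∧ y.2.Nonempty)
    (T2.init, ψ) (hπ0 ▸ hinit) fun n x hx => by
      obtain ⟨e2, s2', hobs, hne, hmem⟩ := hR hx (τ1 n) (π1 (n + 1)) (hπ1 n)
      exact ⟨(s2', rderiv (τ1 n) e2 x.2), hmem, e2, hobs, rfl, Set.nonempty_iff_ne_empty.2 hne⟩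
  choose τ2 hobs hderiv hne using fun n => (hf n).2
  have hprefix : ∀ n, (f n).2 = rderivPrefix τ1 τ2 n ψ := by
    intro n
    induction n with
    | zero => simp [hf0]
    | succ n ih => rw [hderiv, ih, rderiv_rderivPrefix]
  refine ⟨τ2, ⟨fun n => (f n).1, by simp [hf0], hobs⟩, hsafety ?_⟩
  exact mem_safeCl_of_forall_rderivPrefix_succ_nonempty fun n => hprefix (n + 1) ▸ hne n
end
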